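/- Let B ∈ ℝ^{M×N} and let α = ‖B‖₂ be the matrix operator 2-norm of B (the largest singular value, i.e., the operator norm of B as a map between Euclidean spaces). Then for every x ∈ ℝ^N, S_B(x) ≤ S_{αI}(x) = ∑_{n=1}^N s_α(x_n), where I is the N×N identity matrix. -/
import Mathlib

open Matrix

noncomputable def norm1 {N : ℕ} (v : Fin N → ℝ) : ℝ := ∑ n, |v n|

def norm2sq {M : ℕ} (u : Fin M → ℝ) : ℝ := ∑ m, (u m) ^ 2

noncomputable def genHuber {M N : ℕ} (B : Matrix (Fin M) (Fin N) ℝ) (x : Fin N → ℝ) : ℝ :=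
  ⨅ v : Fin N → ℝ, (norm1 v + (1 / 2) * norm2sq (B.mulVec (x - v)))

noncomputable def gmcPenalty {M N : ℕ} (B : Matrix (Fin M) (Fin N) ℝ) (x : Fin N → ℝ) : ℝ :=
  norm1 x - genHuber B x

noncomputable def huber (x : ℝ) : ℝ :=
  if |x| ≤ 1 then x ^ 2 / 2 else |x| - 1 / 2

noncomputable def scaledHuber (b x : ℝ) : ℝ :=
  if b = 0 then 0 else huber (b ^ 2 * x) / b ^ 2

noncomputable def l2OpNorm {M N : ℕ} (B : Matrix (Fin M) (Fin N) ℝ) : ℝ :=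
  ‖LinearMap.toContinuousLinearMap (Matrix.toEuclideanLin B)‖

lemma norm1_nonneg {N : ℕ} (v : Fin N → ℝ) : 0 ≤ norm1 v :=
  Finset.sum_nonneg fun _ _ => abs_nonneg _

lemma norm2sq_nonneg {M : ℕ} (u : Fin M → ℝ) : 0 ≤ norm2sq u :=
  Finset.sum_nonneg fun _ _ => sq_nonneg _

lemma genHuber_bdd {M N : ℕ} (B : Matrix (Fin M) (Fin N) ℝ) (x : Fin N → ℝ) :
    BddBelow (Set.range fun v : Fin N → ℝ =>
      norm1 v + (1 / 2) * norm2sq (B.mulVec (x - v))) := by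
  refine ⟨0, ?_⟩
  rintro y ⟨v, rfl⟩
  have := norm1_nonneg v
  have := norm2sq_nonneg (B.mulVec (x - v))
  linarith

lemma scalar_lower (α x t : ℝ) :
    scaledHuber α x ≤ |t| + α ^ 2 / 2 * (x - t) ^ 2 := by
  unfold scaledHuber huber
  by_cases h : α = 0
  · simp only [h, if_pos rfl]
    positivity
  · have hc : (0:ℝ) < α ^ 2 := by positivity
    rw [if_neg h]
    by_cases h2 : |α ^ 2 * x| ≤ 1
    · rw [if_pos h2]
      have h3 := abs_le.mp h2
      have e1 : (α ^ 2 * x) ^ 2 / 2 / α ^ 2 = α ^ 2 * x ^ 2 / 2 := by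
        field_simp
      rw [e1]
      have p1 : 0 ≤ (|t| - t) * (1 + α ^ 2 * x) := by
        have := le_abs_self t
        nlinarith [h3.1]
      have p2 : 0 ≤ (|t| + t) * (1 - α ^ 2 * x) := by
        have := neg_abs_le t
        nlinarith [h3.2]
      nlinarith [mul_nonneg hc.le (sq_nonneg t)]
    · rw [if_neg h2]
      have habs : |α ^ 2 * x| = α ^ 2 * |x| := by
        rw [abs_mul, abs_of_pos hc]
      rw [habs, div_le_iff₀ hc]
      have tri : |x| - |t| ≤ |x - t| := abs_sub_abs_le_abs_sub x t
      have key : α ^ 2 * |x - t| - 1 / 2 ≤ α ^ 2 / 2 * (x - t) ^ 2 * α ^ 2 := by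
        rw [← sq_abs (x - t)]
        nlinarith [sq_nonneg (α ^ 2 * |x - t| - 1)]
      linarith [mul_le_mul_of_nonneg_left tri hc.le, key]

lemma scalar_attained (α x : ℝ) :
    ∃ t : ℝ, |t| + α ^ 2 / 2 * (x - t) ^ 2 = scaledHuber α x := by
  unfold scaledHuber huber
  by_cases h : α = 0
  · exact ⟨0, by simp [h]⟩
  · have hc : (0:ℝ) < α ^ 2 := by positivity
    rw [if_neg h]
    by_cases h2 : |α ^ 2 * x| ≤ 1
    · refine ⟨0, ?_⟩
      rw [if_pos h2]
      field_simp
      ring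
    · rw [if_neg h2]
      push_neg at h2
      have habs : |α ^ 2 * x| = α ^ 2 * |x| := by
        rw [abs_mul, abs_of_pos hc]
      rw [habs] at h2 ⊢
      rcases le_or_gt 0 x with hx | hx
      · refine ⟨x - 1 / α ^ 2, ?_⟩
        rw [abs_of_nonneg hx] at h2 ⊢
        have hxpos : 1 / α ^ 2 < x := by
          rw [div_lt_iff₀ hc]; nlinarith
        rw [abs_of_pos (by linarith)]
        field_simp
        ring
      · refine ⟨x + 1 / α ^ 2, ?_⟩
        rw [abs_of_neg hx] at h2 ⊢
        have hxneg : x + 1 / α ^ 2 < 0 := by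
          have : 1 / α ^ 2 < -x := by rw [div_lt_iff₀ hc]; nlinarith
          linarith
        rw [abs_of_neg hxneg]
        field_simp
        ring

lemma mulVec_norm2sq_le {M N : ℕ} (B : Matrix (Fin M) (Fin N) ℝ) (u : Fin N → ℝ) :
    norm2sq (B.mulVec u) ≤ (l2OpNorm B) ^ 2 * norm2sq u := by
  set f := LinearMap.toContinuousLinearMap (Matrix.toEuclideanLin B)
  set u' : EuclideanSpace ℝ (Fin N) := (WithLp.equiv 2 (Fin N → ℝ)).symm u
  have h1 : ‖f u'‖ ≤ l2OpNorm B * ‖u'‖ := f.le_opNorm u'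
  have hfu : f u' = (WithLp.equiv 2 (Fin M → ℝ)).symm (B.mulVec u) := by
    simpa [f, u'] using Matrix.toEuclideanLin_apply_piLp_equiv_symm B u
  have hn2 : ∀ (K : ℕ) (w : Fin K → ℝ),
      norm2sq w = ‖(WithLp.equiv 2 (Fin K → ℝ)).symm w‖ ^ 2 := by
    intro K w
    rw [EuclideanSpace.norm_eq, Real.sq_sqrt (Finset.sum_nonneg fun _ _ => sq_nonneg _)]
    simp [norm2sq, sq_abs]
  rw [hn2 M, hn2 N, ← hfu]
  calc ‖f u'‖ ^ 2 ≤ (l2OpNorm B * ‖u'‖) ^ 2 := by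
        apply pow_le_pow_left₀ (norm_nonneg _) h1
    _ = l2OpNorm B ^ 2 * ‖u'‖ ^ 2 := by ring

lemma smul_one_obj {N : ℕ} (α : ℝ) (x v : Fin N → ℝ) :
    norm1 v + (1 / 2) * norm2sq ((α • (1 : Matrix (Fin N) (Fin N) ℝ)).mulVec (x - v))
      = ∑ n, (|v n| + α ^ 2 / 2 * (x n - v n) ^ 2) := by
  rw [Matrix.smul_mulVec, Matrix.one_mulVec, Finset.sum_add_distrib]
  congr 1
  simp only [norm2sq, Pi.smul_apply, Pi.sub_apply, smul_eq_mul, Finset.mul_sum]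
  apply Finset.sum_congr rfl
  intro n _
  ring

/-- With `α = ‖B‖₂`, the generalized Huber function satisfies
`S_B(x) ≤ S_{αI}(x) = ∑ₙ s_α(xₙ)`. -/
theorem genHuber_le_opNorm_scaled_identity {M N : ℕ} (B : Matrix (Fin M) (Fin N) ℝ)
    (x : Fin N → ℝ) :
    genHuber B x ≤ genHuber (l2OpNorm B • (1 : Matrix (Fin N) (Fin N) ℝ)) x ∧
    genHuber (l2OpNorm B • (1 : Matrix (Fin N) (Fin N) ℝ)) x
      = ∑ n, scaledHuber (l2OpNorm B) (x n) := by
  set α := l2OpNorm B with hα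
  constructor
  · apply le_ciInf
    intro v
    refine le_trans (ciInf_le (genHuber_bdd B x) v) ?_
    have h1 := mulVec_norm2sq_le B (x - v)
    have h2 : norm2sq ((α • (1 : Matrix (Fin N) (Fin N) ℝ)).mulVec (x - v))
        = α ^ 2 * norm2sq (x - v) := by
      rw [Matrix.smul_mulVec, Matrix.one_mulVec]
      simp only [norm2sq, Pi.smul_apply, smul_eq_mul, Finset.mul_sum]
      apply Finset.sum_congr rfl
      intro n _
      ring
    rw [h2]
    linarith
  · apply le_antisymm
    · choose t ht using fun n => scalar_attained α (x n)
      refine le_trans (ciInf_le (genHuber_bdd _ x) t) ?_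
      rw [smul_one_obj]
      exact le_of_eq (Finset.sum_congr rfl fun n _ => ht n)
    · apply le_ciInf
      intro v
      rw [smul_one_obj]
      exact Finset.sum_le_sum fun n _ => scalar_lower α (x n) (v n)
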